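/- arXiv:1610.04374 — 2 statements merged into one kernel-verified Lean document; each statement's English description precedes it below -/
import Mathlib

section
/- Let R = S ⊗ P be a tensor product of graded rings where P is a polynomial ring over a field (with generators of positive degree) and S is a nonnegatively graded ring with S⁰ a field. If e ∈ R has the form e = p ⊗ 1 + (terms of positive degree in S), where p ∈ P is a nonzero homogeneous polynomial, and moreover e is homogeneous of the same total degree as p, then e is not a zero divisor in R. -/
/-!
Split `S ⊗ P` into components by `S`-degree. Every term of `e` other than `1 ⊗ p` has positive
`S`-degree, so if the components of `x` vanish below degree `m`, the degree-`m` component of `e * x`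
is `(1 ⊗ p) * xₘ`. Multiplication by `1 ⊗ p` is the base change of the injective map `p * ·` along
the flat module `S`, hence injective; by induction on `m` every `xₘ` vanishes when `e * x = 0`.
-/

open TensorProduct Filter Finset DirectSum

theorem IsLeftRegular.one_tmul {R S P : Type*} [CommSemiring R] [Semiring S] [Algebra R S]
    [Module.Flat R S] [Semiring P] [Algebra R P] {p : P} (hp : IsLeftRegular p) :
    IsLeftRegular ((1 : S) ⊗ₜ[R] p) := by
  have h : LinearMap.mulLeft R ((1 : S) ⊗ₜ[R] p) = (LinearMap.mulLeft R p).lTensor S :=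
    TensorProduct.ext' fun s q => by simp
  have := Module.Flat.lTensor_preserves_injective_linearMap (M := S) (LinearMap.mulLeft R p) hp
  rwa [← h] at this

namespace GradedAlgebra

section Semiring

variable {R S : Type*} [CommSemiring R] [Semiring S] [Algebra R S]
  (𝒜 : ℕ → Submodule R S) [GradedAlgebra 𝒜] (P : Type*) [Semiring P] [Algebra R P]

theorem eventually_sum_range_proj (s : S) : ∀ᶠ n in atTop, ∑ i ∈ range n, proj 𝒜 i s = s := by
  classical
  filter_upwards [eventually_gt_atTop ((decompose 𝒜 s).support.sup id)] with n hn
  conv_rhs => rw [← sum_support_decompose 𝒜 s]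
  refine (sum_subset (fun i hi => mem_range.2 ((le_sup (f := id) hi).trans_lt hn))
    fun i _ hi => ?_).symm
  rw [proj_apply, DFinsupp.notMem_support_iff.1 hi, ZeroMemClass.coe_zero]

noncomputable def projTensor (i : ℕ) : S ⊗[R] P →ₗ[R] S ⊗[R] P :=
  (proj 𝒜 i).rTensor P

def positiveTensorSpan : Submodule R (S ⊗[R] P) :=
  Submodule.span R {x | ∃ i : ℕ, 0 < i ∧ ∃ s ∈ 𝒜 i, ∃ q : P, x = s ⊗ₜ[R] q}

variable {P}

theorem eventually_sum_range_projTensor (x : S ⊗[R] P) :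
    ∀ᶠ n in atTop, ∑ i ∈ range n, projTensor 𝒜 P i x = x := by
  induction x using TensorProduct.induction_on with
  | zero => simp
  | tmul s q =>
    filter_upwards [eventually_sum_range_proj 𝒜 s] with n hn
    simp only [projTensor, LinearMap.rTensor_tmul, ← sum_tmul, hn]
  | add x y hx hy =>
    filter_upwards [hx, hy] with n hxn hyn
    simp only [map_add, sum_add_distrib, hxn, hyn]

theorem eq_zero_of_forall_projTensor_eq_zero {x : S ⊗[R] P}
    (h : ∀ i, projTensor 𝒜 P i x = 0) : x = 0 := by
  obtain ⟨n, hn⟩ := (eventually_sum_range_projTensor 𝒜 x).exists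
  simpa [h] using hn.symm

theorem projTensor_tmul_mul_of_le {i n : ℕ} (hin : i ≤ n) {s : S} (hs : s ∈ 𝒜 i) (q : P)
    (x : S ⊗[R] P) :
    projTensor 𝒜 P n ((s ⊗ₜ q) * x) = (s ⊗ₜ q) * projTensor 𝒜 P (n - i) x := by
  induction x using TensorProduct.induction_on with
  | zero => simp
  | tmul t r =>
    simp only [projTensor, LinearMap.rTensor_tmul, Algebra.TensorProduct.tmul_mul_tmul, proj_apply,
      coe_decompose_mul_of_left_mem_of_le 𝒜 hs hin]
  | add x y hx hy => simp only [mul_add, map_add, hx, hy]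

theorem projTensor_tmul_mul_of_lt {i n : ℕ} (hni : n < i) {s : S} (hs : s ∈ 𝒜 i) (q : P)
    (x : S ⊗[R] P) :
    projTensor 𝒜 P n ((s ⊗ₜ q) * x) = 0 := by
  induction x using TensorProduct.induction_on with
  | zero => simp
  | tmul t r =>
    simp only [projTensor, LinearMap.rTensor_tmul, Algebra.TensorProduct.tmul_mul_tmul, proj_apply,
      coe_decompose_mul_of_left_mem_of_not_le 𝒜 hs hni.not_ge, zero_tmul]
  | add x y hx hy => simp only [mul_add, map_add, hx, hy, add_zero]

theorem projTensor_one_tmul_mul (n : ℕ) (p : P) (x : S ⊗[R] P) :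
    projTensor 𝒜 P n (((1 : S) ⊗ₜ p) * x) = ((1 : S) ⊗ₜ p) * projTensor 𝒜 P n x := by
  simpa using projTensor_tmul_mul_of_le 𝒜 (Nat.zero_le n) (SetLike.one_mem_graded 𝒜) p x

theorem projTensor_mul_eq_zero {n : ℕ} {f x : S ⊗[R] P} (hf : f ∈ positiveTensorSpan 𝒜 P)
    (hx : ∀ j < n, projTensor 𝒜 P j x = 0) : projTensor 𝒜 P n (f * x) = 0 := by
  induction hf using Submodule.span_induction with
  | mem y hy =>
    obtain ⟨i, hi, s, hs, q, rfl⟩ := hy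
    by_cases hin : i ≤ n
    · rw [projTensor_tmul_mul_of_le 𝒜 hin hs, hx (n - i) (by omega), mul_zero]
    · exact projTensor_tmul_mul_of_lt 𝒜 (not_le.1 hin) hs q x
  | zero => rw [zero_mul, map_zero]
  | add a b _ _ ha hb => rw [add_mul, map_add, ha, hb, add_zero]
  | smul c a _ ha => rw [smul_mul_assoc, map_smul, ha, smul_zero]

end Semiring

theorem isLeftRegular_one_tmul_add {R S P : Type*} [CommRing R] [Ring S] [Algebra R S]
    [Module.Flat R S] (𝒜 : ℕ → Submodule R S) [GradedAlgebra 𝒜] [Ring P] [Algebra R P]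
    {p : P} (hp : IsLeftRegular p) {f : S ⊗[R] P} (hf : f ∈ positiveTensorSpan 𝒜 P) :
    IsLeftRegular ((1 : S) ⊗ₜ[R] p + f) := by
  refine isLeftRegular_iff_right_eq_zero_of_mul.2 fun x hx =>
    eq_zero_of_forall_projTensor_eq_zero 𝒜 fun m => ?_
  induction m using Nat.strong_induction_on with
  | _ m ih =>
    have h := congrArg (projTensor 𝒜 P m) hx
    rw [add_mul, map_add, projTensor_mul_eq_zero 𝒜 hf ih, add_zero, projTensor_one_tmul_mul 𝒜,
      map_zero] at h
    exact isLeftRegular_iff_right_eq_zero_of_mul.1 hp.one_tmul _ h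

end GradedAlgebra

theorem euler_class_not_zero_divisor_general
    (K : Type*) [Field K] (S : Type*) [CommRing S] [Algebra K S]
    (A : ℕ → Submodule K S) [GradedAlgebra A]
    (σ : Type*)
    (e : S ⊗[K] MvPolynomial σ K)
    (p : MvPolynomial σ K) (hp : p ≠ 0)
    (hpos : e - (1 : S) ⊗ₜ[K] p ∈
      Submodule.span K {x : S ⊗[K] MvPolynomial σ K |
        ∃ i : ℕ, 0 < i ∧ ∃ s ∈ A i, ∃ q : MvPolynomial σ K, x = s ⊗ₜ[K] q}) :
    ∀ x : S ⊗[K] MvPolynomial σ K, e * x = 0 → x = 0 := by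
  have he := GradedAlgebra.isLeftRegular_one_tmul_add A (IsRegular.of_ne_zero hp).left hpos
  rw [add_sub_cancel] at he
  exact isLeftRegular_iff_right_eq_zero_of_mul.1 he

/-- Algebraic core of injectivity of multiplication by the equivariant Euler class.
Let `S` be a nonnegatively graded commutative `K`-algebra (grading `A`) whose
degree-zero part is a field, and `P = K[σ]` a polynomial ring over the field `K`
(generators in positive degree).  If `e ∈ R = S ⊗ P` is of the form
`e = 1 ⊗ p + (terms of positive degree in S)` with `p ≠ 0` homogeneous of degree `d`,
and `e` is homogeneous of total degree `d` (i.e. a sum of terms `s ⊗ q` with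
`deg s + deg q = d`, `q` homogeneous), then `e` is not a zero divisor in `R`. -/
theorem euler_class_not_zero_divisor
    (K : Type*) [Field K] (S : Type*) [CommRing S] [Algebra K S]
    (A : ℕ → Submodule K S) [GradedAlgebra A]
    (hS0field : ∀ x ∈ A 0, x ≠ 0 → ∃ y ∈ A 0, x * y = 1)
    (σ : Type*)
    (e : S ⊗[K] MvPolynomial σ K)
    (p : MvPolynomial σ K) (d : ℕ) (hp : p ≠ 0) (hphom : p.IsHomogeneous d)
    (hpos : e - (1 : S) ⊗ₜ[K] p ∈
      Submodule.span K {x : S ⊗[K] MvPolynomial σ K |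
        ∃ i : ℕ, 0 < i ∧ ∃ s ∈ A i, ∃ q : MvPolynomial σ K, x = s ⊗ₜ[K] q})
    (hhom : e ∈ Submodule.span K {x : S ⊗[K] MvPolynomial σ K |
        ∃ i j : ℕ, i + j = d ∧ ∃ s ∈ A i, ∃ q : MvPolynomial σ K,
          q.IsHomogeneous j ∧ x = s ⊗ₜ[K] q}) :
    ∀ x : S ⊗[K] MvPolynomial σ K, e * x = 0 → x = 0 :=
  euler_class_not_zero_divisor_general K S A σ e p hp hpos
end

section
/- Let 0 → A →^{(j⁺,j⁻)} B⁺ ⊕ B⁻ →^{i⁺−i⁻} C → 0 be a short exact sequence of modules, and set K± = ker(j^± : A → B^±). Then the kernel of the composite map κ = i⁺ ∘ j⁺ : A → C equals K⁺ + K⁻, and if moreover K⁺ ∩ K⁻ = 0 then ker κ = K⁺ ⊕ K⁻. -/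
/-- Tolman–Weitsman description of the kernel of the (basic) Kirwan map.  Given a
short exact sequence `0 → A → B⁺ ⊕ B⁻ → C → 0` with first map `a ↦ (j⁺a, j⁻a)` and
second map `(b⁺,b⁻) ↦ i⁺b⁺ − i⁻b⁻`, set `K± = ker j±`.  Then the kernel of the
composite `κ = i⁺ ∘ j⁺ : A → C` equals `K⁺ + K⁻` (= `K⁺ ⊔ K⁻`), and if moreover
`K⁺ ∩ K⁻ = 0`, every element of `ker κ` decomposes uniquely as a sum of an
element of `K⁺` and an element of `K⁻`, i.e. `ker κ = K⁺ ⊕ K⁻`. -/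
theorem kernel_of_kirwan_map_eq_sup
    (R : Type*) [CommRing R]
    (A Bp Bm C : Type*)
    [AddCommGroup A] [Module R A] [AddCommGroup Bp] [Module R Bp]
    [AddCommGroup Bm] [Module R Bm] [AddCommGroup C] [Module R C]
    (jp : A →ₗ[R] Bp) (jm : A →ₗ[R] Bm) (ip : Bp →ₗ[R] C) (im : Bm →ₗ[R] C)
    (hinj : Function.Injective (fun a : A => (jp a, jm a)))
    (hexact : ∀ (bp : Bp) (bm : Bm), ip bp - im bm = 0 ↔ ∃ a : A, jp a = bp ∧ jm a = bm)
    (hsurj : ∀ c : C, ∃ (bp : Bp) (bm : Bm), ip bp - im bm = c) :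
    LinearMap.ker (ip ∘ₗ jp) = LinearMap.ker jp ⊔ LinearMap.ker jm ∧
      (LinearMap.ker jp ⊓ LinearMap.ker jm = ⊥ →
        ∀ x ∈ LinearMap.ker (ip ∘ₗ jp),
          ∃! q : A × A, q.1 ∈ LinearMap.ker jp ∧ q.2 ∈ LinearMap.ker jm ∧
            x = q.1 + q.2) := by
  have key : LinearMap.ker (ip ∘ₗ jp) = LinearMap.ker jp ⊔ LinearMap.ker jm := by
    apply le_antisymm
    · intro x hx
      simp only [LinearMap.mem_ker, LinearMap.comp_apply] at hx
      have h0 : ip (jp x) - im 0 = 0 := by simp [hx]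
      obtain ⟨a, ha1, ha2⟩ := (hexact (jp x) 0).mp h0
      have h1 : x - a ∈ LinearMap.ker jp := by
        simp [LinearMap.mem_ker, map_sub, ha1]
      have h2 : a ∈ LinearMap.ker jm := by simp [LinearMap.mem_ker, ha2]
      have : x = (x - a) + a := by abel
      rw [this]
      exact Submodule.add_mem_sup h1 h2
    · rw [sup_le_iff]
      constructor
      · intro x hx
        simp only [LinearMap.mem_ker] at hx ⊢
        simp [LinearMap.comp_apply, hx]
      · intro x hx
        simp only [LinearMap.mem_ker] at hx ⊢
        have := (hexact (jp x) (jm x)).mpr ⟨x, rfl, rfl⟩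
        simp only [LinearMap.comp_apply]
        rw [hx, map_zero] at this
        simpa using this
  refine ⟨key, fun hdisj x hx => ?_⟩
  rw [key] at hx
  obtain ⟨u, hu, v, hv, huv⟩ := Submodule.mem_sup.mp hx
  refine ⟨(u, v), ⟨hu, hv, huv.symm⟩, ?_⟩
  rintro ⟨u', v'⟩ ⟨hu', hv', huv'⟩
  have hd : u' - u ∈ LinearMap.ker jp ⊓ LinearMap.ker jm := by
    constructor
    · exact Submodule.sub_mem _ hu' hu
    · have : v - v' = u' - u := by
        rw [sub_eq_sub_iff_add_eq_add, add_comm]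
        exact huv.trans huv'
      rw [← this]
      exact Submodule.sub_mem _ hv hv'
  rw [hdisj, Submodule.mem_bot, sub_eq_zero] at hd
  have hv2 : v' = v := by
    have heq : u + v = u' + v' := huv.trans huv'
    rw [hd] at heq
    exact (add_left_cancel heq).symm
  simp [hd, hv2]
end
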